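/- If a consensus method φ satisfies unanimity and extension stability, then φ is Pareto on rooted triples: for any profile P of trees on X and any a,b,c ∈ X, if every tree in P displays the rooted triple ab|c, then φ(P) displays ab|c. -/

import Mathlib

/-! Restrict everything to `Y = {a, b, c}`. A tree displays `ab|c` exactly when its restriction to
`Y` contains `{a, b}`, and the only hierarchy on `Y` containing `{a, b}` is the resolved triple.
Hence the restricted profile is constant, unanimity makes its consensus the resolved triple, and
extension stability transports the cluster `{a, b}` into `φ(P)|_Y`. -/

/-- A (candidate) rooted phylogenetic tree, encoded by its set of clusters. -/
abbrev PTree : Type := Finset (Finset ℕ)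

/-- Two clusters are nested: disjoint or one contained in the other. -/
abbrev Nested (C D : Finset ℕ) : Prop := C ∩ D = ∅ ∨ C ⊆ D ∨ D ⊆ C

/-- `H` is a hierarchy on leaf set `X`: a rooted phylogenetic tree in `RP(X)`. -/
structure IsHierarchy (X : Finset ℕ) (H : PTree) : Prop where
  subset_top : ∀ C ∈ H, C ⊆ X
  cluster_nonempty : ∀ C ∈ H, C.Nonempty
  top_mem : X ∈ H
  singleton_mem : ∀ x ∈ X, ({x} : Finset ℕ) ∈ H
  laminar : ∀ C ∈ H, ∀ D ∈ H, Nested C D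

/-- Restriction `T|_Y` of a tree to a subset `Y` of the leaves. -/
def restrictT (H : PTree) (Y : Finset ℕ) : PTree :=
  (H.image (fun C => C ∩ Y)).filter (fun C => C.Nonempty)

/-- A consensus method: for every leaf set and profile, an output tree. -/
abbrev ConsensusMethod : Type := Finset ℕ → List PTree → PTree

/-- Relabel the leaves of a tree by `f`. -/
def relabelT (f : ℕ → ℕ) (H : PTree) : PTree := H.image (fun C => C.image f)

/-- A consensus method sends profiles of trees on `X` to a tree on `X`. -/
def ProducesHierarchy (φ : ConsensusMethod) : Prop :=
  ∀ (X : Finset ℕ) (P : List PTree), P ≠ [] → (∀ T ∈ P, IsHierarchy X T) →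
    IsHierarchy X (φ X P)

/-- Unanimity: a constant profile yields that tree. -/
def Unanimity (φ : ConsensusMethod) : Prop :=
  ∀ (X : Finset ℕ) (T : PTree) (k : ℕ), k ≠ 0 → IsHierarchy X T →
    φ X (List.replicate k T) = T

/-- Anonymity: invariance under reordering the profile. -/
def Anonymity (φ : ConsensusMethod) : Prop :=
  ∀ (X : Finset ℕ) (P P' : List PTree), (∀ T ∈ P, IsHierarchy X T) →
    P.Perm P' → φ X P = φ X P'

/-- Neutrality: equivariance under relabelling the leaves by a bijection. -/
def Neutrality (φ : ConsensusMethod) : Prop :=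
  ∀ (X : Finset ℕ) (P : List PTree) (e : ℕ ≃ ℕ), (∀ T ∈ P, IsHierarchy X T) →
    φ (X.image e) (P.map (relabelT e)) = relabelT e (φ X P)

/-- Extension stability: `φ(P|_Y) ⪯ φ(P)|_Y` (every cluster of the consensus of
the restricted profile is a cluster of the restriction of the consensus). -/
def ExtensionStable (φ : ConsensusMethod) : Prop :=
  ∀ (X : Finset ℕ) (P : List PTree) (Y : Finset ℕ), (∀ T ∈ P, IsHierarchy X T) →
    Y ⊆ X → Y.Nonempty →
    φ Y (P.map (fun T => restrictT T Y)) ⊆ restrictT (φ X P) Y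

/-- `T` displays the rooted triple `ab|c`: some cluster contains `a,b` but not `c`. -/
def Displays (T : PTree) (a b c : ℕ) : Prop := ∃ C ∈ T, a ∈ C ∧ b ∈ C ∧ c ∉ C

lemma mem_restrictT {H : PTree} {Y C : Finset ℕ} :
    C ∈ restrictT H Y ↔ (∃ D ∈ H, D ∩ Y = C) ∧ C.Nonempty := by
  simp [restrictT, and_comm]

lemma Nested.inter_right {C D : Finset ℕ} (h : Nested C D) (Y : Finset ℕ) :
    Nested (C ∩ Y) (D ∩ Y) := by
  rcases h with h | h | h
  · exact Or.inl (Finset.subset_empty.1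
      (h ▸ Finset.inter_subset_inter Finset.inter_subset_left Finset.inter_subset_left))
  · exact Or.inr (Or.inl (Finset.inter_subset_inter_right h))
  · exact Or.inr (Or.inr (Finset.inter_subset_inter_right h))

lemma IsHierarchy.restrict {X Y : Finset ℕ} {H : PTree} (hH : IsHierarchy X H)
    (hYX : Y ⊆ X) (hY : Y.Nonempty) : IsHierarchy Y (restrictT H Y) where
  subset_top := by
    rintro _ hC
    obtain ⟨⟨D, -, rfl⟩, -⟩ := mem_restrictT.1 hC
    exact Finset.inter_subset_right
  cluster_nonempty _ hC := (mem_restrictT.1 hC).2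
  top_mem := mem_restrictT.2 ⟨⟨X, hH.top_mem, Finset.inter_eq_right.2 hYX⟩, hY⟩
  singleton_mem x hx := mem_restrictT.2
    ⟨⟨{x}, hH.singleton_mem x (hYX hx), Finset.singleton_inter_of_mem hx⟩, Finset.singleton_nonempty x⟩
  laminar := by
    rintro _ hCY _ hDY
    obtain ⟨⟨C, hC, rfl⟩, -⟩ := mem_restrictT.1 hCY
    obtain ⟨⟨D, hD, rfl⟩, -⟩ := mem_restrictT.1 hDY
    exact (hH.laminar C hC D hD).inter_right Y

lemma Finset.inter_triple_eq_pair_iff {α : Type*} [DecidableEq α] {a b c : α} {s : Finset α}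
    (hac : a ≠ c) (hbc : b ≠ c) : s ∩ {a, b, c} = {a, b} ↔ a ∈ s ∧ b ∈ s ∧ c ∉ s := by
  simp only [Finset.ext_iff, Finset.mem_inter, Finset.mem_insert, Finset.mem_singleton]
  grind

lemma Finset.Nonempty.subset_pair_iff {α : Type*} [DecidableEq α] {a b : α} {s : Finset α}
    (hs : s.Nonempty) : s ⊆ {a, b} ↔ s = {a} ∨ s = {b} ∨ s = {a, b} := by
  refine ⟨fun h => ?_, by rintro (rfl | rfl | rfl) <;> simp [Finset.subset_insert]⟩
  obtain ⟨x, hx⟩ := hs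
  simp only [Finset.ext_iff, Finset.subset_iff, Finset.mem_insert, Finset.mem_singleton] at h ⊢
  grind

lemma displays_iff_pair_mem_restrictT {T : PTree} {a b c : ℕ} (hac : a ≠ c) (hbc : b ≠ c) :
    Displays T a b c ↔ {a, b} ∈ restrictT T {a, b, c} := by
  simp only [mem_restrictT, Finset.inter_triple_eq_pair_iff hac hbc, Finset.insert_nonempty,
    and_true, Displays]

def rootedTripleTree (a b c : ℕ) : PTree := {{a, b, c}, {a}, {b}, {c}, {a, b}}

lemma IsHierarchy.eq_rootedTripleTree {a b c : ℕ} {H : PTree} (hH : IsHierarchy {a, b, c} H)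
    (hac : a ≠ c) (hbc : b ≠ c) (hab : {a, b} ∈ H) : H = rootedTripleTree a b c := by
  ext C
  simp only [rootedTripleTree, Finset.mem_insert, Finset.mem_singleton]
  refine ⟨fun hC => ?_, ?_⟩
  · have hCY := hH.subset_top C hC
    have hC₀ := hH.cluster_nonempty C hC
    rcases hH.laminar C hC _ hab with hdisj | hsub | hsup
    · have : C ⊆ {c} := fun x hx => by
        have hxab := Finset.eq_empty_iff_forall_notMem.1 hdisj x
        have hxY := hCY hx
        simp only [Finset.mem_inter, Finset.mem_insert, Finset.mem_singleton] at hxab hxY ⊢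
        grind
      grind [hC₀.subset_singleton_iff.1 this]
    · grind [hC₀.subset_pair_iff.1 hsub]
    · by_cases hc : c ∈ C
      · refine Or.inl (hCY.antisymm fun x hx => ?_)
        simp only [Finset.mem_insert, Finset.mem_singleton] at hx
        rcases hx with rfl | rfl | rfl
        exacts [hsup (by simp), hsup (by simp), hc]
      · refine Or.inr (Or.inr (Or.inr (Or.inr (Finset.Subset.antisymm ?_ hsup))))
        intro x hx
        have := hCY hx
        grind
  · rintro (rfl | rfl | rfl | rfl | rfl)
    · exact hH.top_mem
    all_goals first | exact hab | exact hH.singleton_mem _ (by simp)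

theorem pareto_rooted_triples_of_unanimity_extension_stable_general (φ : ConsensusMethod)
    (hU : Unanimity φ) (hE : ExtensionStable φ)
    (X : Finset ℕ) (P : List PTree) (hP : P ≠ []) (hh : ∀ T ∈ P, IsHierarchy X T)
    (a b c : ℕ) (ha : a ∈ X) (hb : b ∈ X) (hc : c ∈ X)
    (hac : a ≠ c) (hbc : b ≠ c)
    (hdisp : ∀ T ∈ P, Displays T a b c) :
    Displays (φ X P) a b c := by
  set Y : Finset ℕ := {a, b, c}
  have hYX : Y ⊆ X := by simp [Y, Finset.insert_subset_iff, ha, hb, hc]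
  have hY : Y.Nonempty := Finset.insert_nonempty _ _
  have hres : ∀ T ∈ P, restrictT T Y = rootedTripleTree a b c := fun T hT =>
    ((hh T hT).restrict hYX hY).eq_rootedTripleTree hac hbc
      ((displays_iff_pair_mem_restrictT hac hbc).1 (hdisp T hT))
  have hprofile : P.map (restrictT · Y) = List.replicate P.length (rootedTripleTree a b c) :=
    List.eq_replicate_iff.2 ⟨P.length_map _, by simpa using hres⟩
  obtain ⟨T, hT⟩ := List.exists_mem_of_ne_nil P hP
  have hcons : φ Y (P.map (restrictT · Y)) = rootedTripleTree a b c := by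
    rw [hprofile]
    exact hU Y _ P.length (List.length_pos_iff.2 hP).ne' (hres T hT ▸ (hh T hT).restrict hYX hY)
  rw [displays_iff_pair_mem_restrictT hac hbc]
  apply hE X P Y hh hYX hY
  rw [hcons]
  simp [rootedTripleTree]

/-- A consensus method satisfying unanimity and extension stability is
Pareto on rooted triples. -/
theorem pareto_rooted_triples_of_unanimity_extension_stable (φ : ConsensusMethod)
    (hH : ProducesHierarchy φ) (hU : Unanimity φ) (hE : ExtensionStable φ)
    (X : Finset ℕ) (P : List PTree) (hP : P ≠ []) (hh : ∀ T ∈ P, IsHierarchy X T)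
    (a b c : ℕ) (ha : a ∈ X) (hb : b ∈ X) (hc : c ∈ X)
    (hab : a ≠ b) (hac : a ≠ c) (hbc : b ≠ c)
    (hdisp : ∀ T ∈ P, Displays T a b c) :
    Displays (φ X P) a b c :=
  pareto_rooted_triples_of_unanimity_extension_stable_general φ hU hE X P hP hh a b c ha hb hc hac
    hbc hdisp
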